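/- Assume K ≥ 2, L ≥ 1 and 0 < c < 1/((K+1)² · (log(K+1))²). Then for every item i and every k : Fin K with k ≥ 1 (i.e. the recommended item of rank k+1 ≥ 2), the truncated personalized PageRank value satisfies Ŝ_i (P i k) < (1−c) · c / (D · log(k+1)). -/

import Mathlib

open Finset Matrix

/-- The normalizing constant `D = ∑_{r=1}^{K} 1 / log (r+1)`. -/
noncomputable def Dconst (K : ℕ) : ℝ := ∑ r ∈ Finset.Icc 1 K, 1 / Real.log ((r : ℝ) + 1)

/-- The weighted adjacency matrix of the recommendation network: `A i j = 1 / log (k+2)` if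
`P i k = j` for some (necessarily unique, by injectivity) rank `k : Fin K`, and `0` otherwise. -/
noncomputable def adj {n K : ℕ} (P : Fin n → Fin K → Fin n) :
    Matrix (Fin n) (Fin n) ℝ := fun i j =>
  ∑ k : Fin K, if P i k = j then 1 / Real.log (((k : ℕ) : ℝ) + 2) else 0

/-- The row-normalized adjacency matrix `Ã = D⁻¹ • A`. -/
noncomputable def normAdj {n K : ℕ} (P : Fin n → Fin K → Fin n) :
    Matrix (Fin n) (Fin n) ℝ :=
  (Dconst K)⁻¹ • adj P

/-- The truncated personalized PageRank vector
`Ŝ_i = (1-c) • ((∑_{k=0}^{L} (c • Ãᵀ)^k) *ᵥ e_i)`. -/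
noncomputable def pprTrunc {n K : ℕ} (P : Fin n → Fin K → Fin n) (c : ℝ) (L : ℕ)
    (i : Fin n) : Fin n → ℝ :=
  (1 - c) • ((∑ k ∈ Finset.range (L + 1), (c • (normAdj P)ᵀ) ^ k) *ᵥ Pi.single i 1)

/-!
Write `M = Ã`, a row-stochastic matrix whose entries are at most `1 / (D log 2)`; hence so are
the entries of every power `M ^ m` with `m ≥ 1`. Since `P i k ≠ i`, the `m = 0` term of
`Ŝ_i (P i k)` vanishes, the `m = 1` term is `c / (D log (k+2))`, and the terms with `m ≥ 2` add
up to at most `c² / ((1-c) D log 2)`. The claim thus reduces to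
`c log (k+2) log (k+1) < (1-c) log 2 (log (k+2) - log (k+1))`: the gap on the right is at least
`1 / (K+1)`, while the choice of `c` makes the left side smaller than `1 / (K+1)²`.
-/

open Real

namespace Matrix

variable {n : Type*} [Fintype n] [DecidableEq n]

theorem mul_apply_le_of_mem_rowStochastic {N M : Matrix n n ℝ} (hN : N ∈ rowStochastic ℝ n)
    {b : ℝ} {j : n} (hb : ∀ l, M l j ≤ b) (i : n) : (N * M) i j ≤ b :=
  calc (N * M) i j = ∑ l, N i l * M l j := mul_apply
    _ ≤ ∑ l, N i l * b := by gcongr with l; exacts [nonneg_of_mem_rowStochastic hN, hb l]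
    _ = b := by rw [← sum_mul, sum_row_of_mem_rowStochastic hN, one_mul]

theorem sum_pow_apply_le_of_mem_rowStochastic {M : Matrix n n ℝ} (hM : M ∈ rowStochastic ℝ n)
    {b c : ℝ} (hb : ∀ i j, M i j ≤ b) (hc0 : 0 ≤ c) (hc1 : c < 1) {i j : n} (hij : i ≠ j)
    (N : ℕ) :
    ∑ m ∈ range N, c ^ m * (M ^ m) i j ≤ c * M i j + c ^ 2 * b / (1 - c) := by
  have hterm_nonneg : ∀ m, 0 ≤ c ^ m * (M ^ m) i j := fun m =>
    mul_nonneg (pow_nonneg hc0 m) (nonneg_of_mem_rowStochastic (pow_mem hM m))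
  have htail : ∑ m ∈ range N, c ^ (m + 2) * (M ^ (m + 2)) i j ≤ c ^ 2 * b / (1 - c) :=
    calc ∑ m ∈ range N, c ^ (m + 2) * (M ^ (m + 2)) i j
        ≤ ∑ m ∈ range N, c ^ (m + 2) * b := by
          gcongr with m
          rw [pow_succ]
          exact mul_apply_le_of_mem_rowStochastic (pow_mem hM _) (fun l => hb l j) i
      _ = c ^ 2 * b * ∑ m ∈ Ico 0 N, c ^ m := by
          rw [← range_eq_Ico, mul_sum]; congr 1 with m; ring
      _ ≤ c ^ 2 * b * (c ^ 0 / (1 - c)) := by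
          have hb0 : 0 ≤ b := (nonneg_of_mem_rowStochastic hM).trans (hb i j)
          gcongr
          exact geom_sum_Ico_le_of_lt_one hc0 hc1
      _ = c ^ 2 * b / (1 - c) := by ring
  calc ∑ m ∈ range N, c ^ m * (M ^ m) i j
      ≤ ∑ m ∈ range (N + 2), c ^ m * (M ^ m) i j :=
        sum_le_sum_of_subset_of_nonneg (range_subset_range.2 (by omega))
          fun m _ _ => hterm_nonneg m
    _ = ∑ m ∈ range N, c ^ (m + 2) * (M ^ (m + 2)) i j + c * M i j := by
        rw [sum_range_succ', sum_range_succ', pow_zero, pow_zero, one_apply_ne hij]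
        simp
    _ ≤ c * M i j + c ^ 2 * b / (1 - c) := by linarith

end Matrix

theorem Dconst_pos {K : ℕ} (hK : 0 < K) : 0 < Dconst K :=
  sum_pos (fun r hr => one_div_pos.2 <| log_pos <| by
      have : (1 : ℝ) ≤ r := by exact_mod_cast (mem_Icc.1 hr).1
      linarith)
    ⟨1, mem_Icc.2 ⟨le_rfl, hK⟩⟩

theorem Dconst_eq_sum_fin (K : ℕ) :
    Dconst K = ∑ k : Fin K, 1 / log (((k : ℕ) : ℝ) + 2) := by
  rw [Dconst, ← Ico_add_one_right_eq_Icc, sum_Ico_eq_sum_range, Nat.add_sub_cancel,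
    Fin.sum_univ_eq_sum_range (fun k => 1 / log ((k : ℝ) + 2))]
  congr 1 with r
  push_cast
  ring_nf

section adj

variable {n K : ℕ} (P : Fin n → Fin K → Fin n)

theorem adj_nonneg (i j : Fin n) : 0 ≤ adj P i j :=
  sum_nonneg fun k _ => by
    split_ifs
    · exact one_div_nonneg.2 (log_nonneg (by linarith [(k : ℕ).cast_nonneg (α := ℝ)]))
    · exact le_rfl

theorem sum_adj_apply (i : Fin n) : ∑ j, adj P i j = Dconst K := by
  simp only [adj]
  rw [sum_comm, Dconst_eq_sum_fin]
  simp only [sum_ite_eq, mem_univ, if_true]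

variable {P} (hinj : ∀ i, Function.Injective (P i))
include hinj

theorem adj_apply_apply (i : Fin n) (k : Fin K) :
    adj P i (P i k) = 1 / log (((k : ℕ) : ℝ) + 2) := by
  rw [adj, sum_eq_single k (fun k' _ hk' => if_neg fun h => hk' (hinj i h)) (by simp),
    if_pos rfl]

theorem adj_le (i j : Fin n) : adj P i j ≤ 1 / log 2 := by
  by_cases h : ∃ k, P i k = j
  · obtain ⟨k, rfl⟩ := h
    rw [adj_apply_apply hinj]
    gcongr
    linarith [(k : ℕ).cast_nonneg (α := ℝ)]
  · push Not at h
    rw [adj, sum_eq_zero fun k _ => if_neg (h k)]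
    exact one_div_nonneg.2 (log_nonneg one_le_two)

end adj

section normAdj

variable {n K : ℕ} {P : Fin n → Fin K → Fin n}

theorem normAdj_mem_rowStochastic (hK : 0 < K) : normAdj P ∈ rowStochastic ℝ (Fin n) := by
  have hD := Dconst_pos hK
  refine mem_rowStochastic_iff_sum.2 ⟨fun i j => ?_, fun i => ?_⟩
  · exact mul_nonneg (inv_nonneg.2 hD.le) (adj_nonneg P i j)
  · simp only [normAdj, Matrix.smul_apply, smul_eq_mul, ← mul_sum, sum_adj_apply,
      inv_mul_cancel₀ hD.ne']

variable (hinj : ∀ i, Function.Injective (P i))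
include hinj

theorem normAdj_apply_apply (i : Fin n) (k : Fin K) :
    normAdj P i (P i k) = (Dconst K)⁻¹ / log (((k : ℕ) : ℝ) + 2) := by
  rw [normAdj, Matrix.smul_apply, adj_apply_apply hinj, smul_eq_mul, mul_one_div]

theorem normAdj_le (hK : 0 < K) (i j : Fin n) : normAdj P i j ≤ (Dconst K)⁻¹ / log 2 := by
  rw [normAdj, Matrix.smul_apply, smul_eq_mul, ← mul_one_div]
  exact mul_le_mul_of_nonneg_left (adj_le hinj i j) (inv_nonneg.2 (Dconst_pos hK).le)

end normAdj

theorem pprTrunc_apply {n K : ℕ} (P : Fin n → Fin K → Fin n) (c : ℝ) (L : ℕ) (i j : Fin n) :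
    pprTrunc P c L i j = (1 - c) * ∑ m ∈ range (L + 1), c ^ m * (normAdj P ^ m) i j := by
  simp only [pprTrunc, Pi.smul_apply, smul_eq_mul, mulVec_single_one, col_apply,
    Matrix.sum_apply, smul_pow, ← transpose_pow, Matrix.smul_apply, transpose_apply]

theorem lt_quarter_of_lt_inv_sq_mul_log_sq {c J : ℝ} (hJ : 3 ≤ J)
    (hc : c < 1 / (J ^ 2 * log J ^ 2)) : c < 1 / 4 := by
  have hlogJ : 0.6931471803 < log J :=
    log_two_gt_d9.trans_le (log_le_log two_pos (by linarith))
  have hJ2 : 9 ≤ J ^ 2 := by nlinarith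
  have hlogJ2 : 0.48 < log J ^ 2 := by nlinarith
  have : 4 < J ^ 2 * log J ^ 2 := by nlinarith
  exact hc.trans (one_div_lt_one_div_of_lt (by norm_num) this)

theorem inv_add_two_le_log_add_two_sub_log_add_one {x : ℝ} (hx : 0 ≤ x) :
    1 / (x + 2) ≤ log (x + 2) - log (x + 1) := by
  have h := one_sub_inv_le_log_of_pos (x := (x + 2) / (x + 1)) (by positivity)
  rwa [log_div (by positivity) (by positivity), inv_div, one_sub_div (by positivity),
    show x + 2 - (x + 1) = 1 by ring] at h

theorem mul_log_mul_log_lt_log_two_mul_log_sub {c x J : ℝ} (hc0 : 0 ≤ c) (hx : 1 ≤ x)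
    (hxJ : x + 2 ≤ J) (hc : c < 1 / (J ^ 2 * log J ^ 2)) :
    c * log (x + 2) * log (x + 1) < (1 - c) * log 2 * (log (x + 2) - log (x + 1)) := by
  have hJ : 3 ≤ J := by linarith
  have ha : log (x + 2) ≤ log J := log_le_log (by linarith) hxJ
  have ha' : log (x + 1) ≤ log J := log_le_log (by linarith) (by linarith)
  have ha'0 : 0 ≤ log (x + 1) := log_nonneg (by linarith)
  have hgap : 1 / J ≤ log (x + 2) - log (x + 1) :=
    (one_div_le_one_div_of_le (by linarith) hxJ).trans
      (inv_add_two_le_log_add_two_sub_log_add_one (by linarith))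
  have hlogJ : 0 < log J := log_pos (by linarith)
  have hdamp : 1 / 3 < (1 - c) * log 2 := by
    nlinarith [lt_quarter_of_lt_inv_sq_mul_log_sq hJ hc, log_two_gt_d9]
  calc c * log (x + 2) * log (x + 1) ≤ c * log J ^ 2 := by
        rw [mul_assoc, sq]; gcongr
    _ < 1 / (J ^ 2 * log J ^ 2) * log J ^ 2 := by gcongr
    _ = 1 / J ^ 2 := by field_simp
    _ ≤ 1 / 3 * (1 / J) := by
        rw [div_mul_div_comm, one_mul, sq]; gcongr
    _ ≤ (1 - c) * log 2 * (1 / J) := by gcongr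
    _ ≤ (1 - c) * log 2 * (log (x + 2) - log (x + 1)) := by gcongr

theorem first_step_add_tail_lt {c ℓ a a' D : ℝ} (hc0 : 0 < c) (hc1 : c < 1) (hℓ : 0 < ℓ)
    (ha : 0 < a) (ha' : 0 < a') (hD : 0 < D) (h : c * a * a' < (1 - c) * ℓ * (a - a')) :
    (1 - c) * (c * (D⁻¹ / a) + c ^ 2 * (D⁻¹ / ℓ) / (1 - c)) < (1 - c) * c / (D * a') := by
  have h1c : 1 - c ≠ 0 := by linarith
  have hlhs : (1 - c) * (c * (D⁻¹ / a) + c ^ 2 * (D⁻¹ / ℓ) / (1 - c))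
      = c / D * ((1 - c) / a + c / ℓ) := by
    field_simp
  have hrhs : (1 - c) * c / (D * a') = c / D * ((1 - c) / a') := by
    field_simp
  rw [hlhs, hrhs]
  refine mul_lt_mul_of_pos_left ?_ (by positivity)
  rw [div_add_div _ _ ha.ne' hℓ.ne', div_lt_div_iff₀ (by positivity) ha']
  nlinarith

theorem pprTrunc_upper_bound_recommended_general
    (n K : ℕ) (P : Fin n → Fin K → Fin n)
    (hinj : ∀ i, Function.Injective (P i))
    (hne : ∀ i k, P i k ≠ i)
    (c : ℝ) (L : ℕ)
    (hc0 : 0 < c)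
    (hc1 : c < 1 / (((K : ℝ) + 1) ^ 2 * Real.log ((K : ℝ) + 1) ^ 2))
    (i : Fin n) (k : Fin K) (hk : 1 ≤ (k : ℕ)) :
    pprTrunc P c L i (P i k) < (1 - c) * c / (Dconst K * Real.log (((k : ℕ) : ℝ) + 1)) := by
  have hK : 0 < K := k.pos
  have hk1 : (1 : ℝ) ≤ (k : ℕ) := by exact_mod_cast hk
  have hkK : ((k : ℕ) : ℝ) + 2 ≤ (K : ℝ) + 1 := by
    exact_mod_cast (by omega : (k : ℕ) + 2 ≤ K + 1)
  have hc_lt_one : c < 1 :=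
    (lt_quarter_of_lt_inv_sq_mul_log_sq (by linarith) hc1).trans (by norm_num)
  calc pprTrunc P c L i (P i k)
      = (1 - c) * ∑ m ∈ range (L + 1), c ^ m * (normAdj P ^ m) i (P i k) := pprTrunc_apply ..
    _ ≤ (1 - c) * (c * normAdj P i (P i k) + c ^ 2 * ((Dconst K)⁻¹ / log 2) / (1 - c)) := by
        refine mul_le_mul_of_nonneg_left ?_ (by linarith)
        exact sum_pow_apply_le_of_mem_rowStochastic (normAdj_mem_rowStochastic hK)
          (normAdj_le hinj hK) hc0.le hc_lt_one (hne i k).symm _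
    _ < (1 - c) * c / (Dconst K * log (((k : ℕ) : ℝ) + 1)) := by
        rw [normAdj_apply_apply hinj]
        exact first_step_add_tail_lt hc0 hc_lt_one (log_pos one_lt_two)
          (log_pos (by linarith)) (log_pos (by linarith)) (Dconst_pos hK)
          (mul_log_mul_log_lt_log_two_mul_log_sub hc0.le hk1 hkK hc1)

/-- Upper bound on the truncated personalized PageRank value of the recommended item of rank
`k+1 ≥ 2`: `Ŝ_i (P i k) < (1-c) · c / (D · log (k+1))`. -/
theorem pprTrunc_upper_bound_recommended
    (n K : ℕ) (hK : 2 ≤ K) (P : Fin n → Fin K → Fin n)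
    (hinj : ∀ i, Function.Injective (P i))
    (hne : ∀ i k, P i k ≠ i)
    (c : ℝ) (L : ℕ) (hL : 1 ≤ L)
    (hc0 : 0 < c)
    (hc1 : c < 1 / (((K : ℝ) + 1) ^ 2 * Real.log ((K : ℝ) + 1) ^ 2))
    (i : Fin n) (k : Fin K) (hk : 1 ≤ (k : ℕ)) :
    pprTrunc P c L i (P i k) < (1 - c) * c / (Dconst K * Real.log (((k : ℕ) : ℝ) + 1)) :=
  pprTrunc_upper_bound_recommended_general n K P hinj hne c L hc0 hc1 i k hk
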